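/- arXiv:2509.09885 — 4 statements merged into one kernel-verified Lean document; each statement's English description precedes it below -/
import Mathlib

section
/- Let N be a squarefree positive integer and let Σ = {(t, t²) : t ∈ ℤ/Nℤ} be the parabola in (ℤ/Nℤ)². Then for every function f : (ℤ/Nℤ)² → ℂ, ( (1/|Σ|) · Σ_{m∈Σ} |f̂(m)|² )^{1/2} ≤ 2^{ω(N)/4} · N^{-1} · ( Σ_{x∈(ℤ/Nℤ)²} |f(x)|^{4/3} )^{3/4}, where ω(N) denotes the number of distinct prime divisors of N. -/
/-!
Duality: with `k = conj f̂ · 1_Σ` one has `∑_{m∈Σ} |f̂(m)|² = ∑ₘ k(m) f̂(m) = ∑ₓ k̂(x) f(x)`,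
which Hölder bounds by `‖k̂‖₄ ‖f‖_{4/3}`. As `k̂² = N⁻¹ (k ∗ k)^`, Plancherel gives
`‖k̂‖₄⁴ = N⁻² ‖k ∗ k‖₂²`, and Cauchy–Schwarz bounds `‖k ∗ k‖₂²` by `r ‖k‖₂⁴`, where `r` is the
largest number of ways to write a point as a sum of two points of `Σ`. Such a representation
`(t, t²) + (s, s²) = z` gives a root of `t² + (z₁ - t)² = z₂`; there are at most two modulo each
prime, so at most `2^ω(N)` modulo a squarefree `N` by the Chinese remainder theorem. Since
`S = ‖k‖₂²` is the sum we started from, this reads `S ≤ (N⁻² 2^ω S²)^{1/4} ‖f‖_{4/3}`, which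
bootstraps to the claim.
-/

open scoped BigOperators

/-- Normalized Fourier transform on `(ℤ/Nℤ)²`:
`f̂(m) = N⁻¹ ∑ₓ f(x) e^{-2πi (x·m)/N}` where `x·m = x₁m₁ + x₂m₂`. -/
noncomputable def dft (N : ℕ) [NeZero N] (f : ZMod N × ZMod N → ℂ)
    (m : ZMod N × ZMod N) : ℂ :=
  (N : ℂ)⁻¹ * ∑ x : ZMod N × ZMod N,
    f x * Complex.exp (-2 * Real.pi * Complex.I *
      (((x.1 * m.1 + x.2 * m.2).val : ℕ) : ℂ) / (N : ℂ))

/-- The parabola `Σ = {(t, t²) : t ∈ ℤ/Nℤ}` in `(ℤ/Nℤ)²`. -/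
def parabola (N : ℕ) [NeZero N] : Finset (ZMod N × ZMod N) :=
  Finset.univ.image (fun t : ZMod N => (t, t ^ 2))

open Finset
open scoped ComplexConjugate

section Counting

variable {R : Type*} [CommRing R] [Fintype R] [DecidableEq R]

lemma card_filter_sq_add_sub_sq_le_two [NoZeroDivisors R] (h2 : (2 : R) ≠ 0) (a b : R) :
    #{t : R | t ^ 2 + (a - t) ^ 2 = b} ≤ 2 := by
  obtain h | ⟨t₀, ht₀⟩ := eq_empty_or_nonempty {t : R | t ^ 2 + (a - t) ^ 2 = b}
  · simp [h]
  refine (card_le_card fun t ht => ?_).trans (card_le_two (a := t₀) (b := a - t₀))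
  rw [mem_filter] at ht ht₀
  have hroots : (2 : R) * ((t - t₀) * (t - (a - t₀))) = 0 := by
    linear_combination ht.2 - ht₀.2
  rcases mul_eq_zero.1 ((mul_eq_zero.1 hroots).resolve_left h2) with h | h
  · simp [sub_eq_zero.1 h]
  · simp [sub_eq_zero.1 h]

lemma card_filter_sq_add_sub_sq_le_prod {ι : Type*} [Fintype ι] [DecidableEq ι]
    {S : ι → Type*} [∀ i, CommRing (S i)] [∀ i, Fintype (S i)] [∀ i, DecidableEq (S i)]
    (φ : R →+* Π i, S i) (hφ : Function.Injective φ) (a b : R) :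
    #{t : R | t ^ 2 + (a - t) ^ 2 = b} ≤
      ∏ i, #{u : S i | u ^ 2 + (φ a i - u) ^ 2 = φ b i} := by
  rw [← Fintype.card_piFinset]
  refine card_le_card_of_injOn φ (fun t ht => ?_) hφ.injOn
  simp only [coe_filter, mem_univ, true_and, Set.mem_ofPred_eq, Fintype.coe_piFinset,
    Set.mem_pi] at ht ⊢
  intro i _
  simpa using congrFun (congrArg φ ht) i

end Counting

lemma ZMod.card_filter_sq_add_sub_sq_le_two {p : ℕ} [NeZero p] (hp : p.Prime) (a b : ZMod p) :
    #{t : ZMod p | t ^ 2 + (a - t) ^ 2 = b} ≤ 2 := by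
  have := Fact.mk hp
  rcases eq_or_ne p 2 with rfl | hp2
  · exact (card_le_univ _).trans (by simp)
  · exact _root_.card_filter_sq_add_sub_sq_le_two
      (Ring.two_ne_zero (by rwa [ZMod.ringChar_zmod_n])) a b

lemma ZMod.card_filter_sq_add_sub_sq_le {N : ℕ} [NeZero N] (hN : Squarefree N) (a b : ZMod N) :
    #{t : ZMod N | t ^ 2 + (a - t) ^ 2 = b} ≤ 2 ^ N.primeFactors.card := by
  have (p : N.primeFactors) : NeZero ((p : ℕ) ^ N.factorization p) :=
    ⟨pow_ne_zero _ (Nat.prime_of_mem_primeFactors p.2).ne_zero⟩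
  refine (card_filter_sq_add_sub_sq_le_prod (ZMod.equivPi N (NeZero.ne N)).toRingHom
    (RingEquiv.injective _) a b).trans ?_
  rw [← Fintype.card_coe N.primeFactors, ← card_univ]
  refine prod_le_pow_card _ _ _ fun p _ => ZMod.card_filter_sq_add_sub_sq_le_two ?_ _ _
  have hp := Nat.prime_of_mem_primeFactors p.2
  rwa [Nat.factorization_eq_one_of_squarefree hN hp (Nat.dvd_of_mem_primeFactors p.2), pow_one]

section Parabola

variable {N : ℕ} [NeZero N]

lemma mem_parabola {u : ZMod N × ZMod N} : u ∈ parabola N ↔ u.2 = u.1 ^ 2 := by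
  simp only [parabola, mem_image, mem_univ, true_and]
  exact ⟨by rintro ⟨t, rfl⟩; rfl, fun h => ⟨u.1, Prod.ext rfl h.symm⟩⟩

lemma card_parabola : #(parabola N) = N := by
  rw [parabola, card_image_of_injective _ fun s t h => congrArg Prod.fst h, card_univ, ZMod.card]

lemma card_filter_parabola_sub_mem_le (hN : Squarefree N) (z : ZMod N × ZMod N) :
    #{u ∈ parabola N | z - u ∈ parabola N} ≤ 2 ^ N.primeFactors.card := by
  refine (card_le_card_of_injOn Prod.fst (fun u hu => ?_) fun u hu v hv huv => ?_).trans
    (ZMod.card_filter_sq_add_sub_sq_le hN z.1 z.2)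
  · simp only [coe_filter, Set.mem_ofPred_eq, mem_parabola, Prod.fst_sub, Prod.snd_sub] at hu
    simp only [coe_filter, mem_univ, true_and, Set.mem_ofPred_eq]
    linear_combination -hu.1 - hu.2
  · simp only [coe_filter, Set.mem_ofPred_eq, mem_parabola] at hu hv
    exact Prod.ext huv (by rw [hu.1, hv.1, huv])

end Parabola

section Energy

variable {G : Type*} [AddCommGroup G] [Fintype G] [DecidableEq G]

noncomputable def selfConv (k : G → ℂ) (z : G) : ℂ := ∑ u, k u * k (z - u)

lemma sum_norm_sq_selfConv_le (A : Finset G) (k : G → ℂ) (hk : ∀ u ∉ A, k u = 0) (K : ℕ)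
    (hK : ∀ z, #{u ∈ A | z - u ∈ A} ≤ K) :
    ∑ z, ‖selfConv k z‖ ^ 2 ≤ K * (∑ u, ‖k u‖ ^ 2) ^ 2 := by
  have hpoint (z : G) :
      ‖selfConv k z‖ ^ 2 ≤ K * ∑ u, ‖k u‖ ^ 2 * ‖k (z - u)‖ ^ 2 := by
    have hsupp : selfConv k z = ∑ u ∈ A with z - u ∈ A, k u * k (z - u) := by
      refine (sum_subset (subset_univ _) fun u _ hu => ?_).symm
      rw [mem_filter, not_and_or] at hu
      rcases hu with hu | hu
      · rw [hk u hu, zero_mul]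
      · rw [hk _ hu, mul_zero]
    calc ‖selfConv k z‖ ^ 2
        ≤ (∑ u ∈ A with z - u ∈ A, ‖k u * k (z - u)‖) ^ 2 := by
          rw [hsupp]
          exact pow_le_pow_left₀ (norm_nonneg _) (norm_sum_le _ _) 2
      _ ≤ #{u ∈ A | z - u ∈ A} * ∑ u ∈ A with z - u ∈ A, ‖k u * k (z - u)‖ ^ 2 :=
          sq_sum_le_card_mul_sum_sq
      _ ≤ K * ∑ u, ‖k u * k (z - u)‖ ^ 2 := by
          gcongr
          · exact_mod_cast hK z
          · exact subset_univ _
      _ = K * ∑ u, ‖k u‖ ^ 2 * ‖k (z - u)‖ ^ 2 := by simp_rw [norm_mul, mul_pow]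
  calc ∑ z, ‖selfConv k z‖ ^ 2
      ≤ ∑ z, K * ∑ u, ‖k u‖ ^ 2 * ‖k (z - u)‖ ^ 2 := sum_le_sum fun z _ => hpoint z
    _ = K * ∑ u, ‖k u‖ ^ 2 * ∑ z, ‖k (z - u)‖ ^ 2 := by
        rw [← mul_sum, sum_comm]
        simp_rw [mul_sum]
    _ = K * (∑ u, ‖k u‖ ^ 2) ^ 2 := by
        simp_rw [Fintype.sum_equiv (Equiv.subRight _) (fun z => ‖k (z - _)‖ ^ 2)
          (fun z => ‖k z‖ ^ 2) fun _ => rfl, ← sum_mul, sq (∑ u, ‖k u‖ ^ 2)]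

end Energy

section Fourier

variable {N : ℕ} [NeZero N]

lemma dft_apply_eq_sum_stdAddChar (f : ZMod N × ZMod N → ℂ) (m : ZMod N × ZMod N) :
    dft N f m = (N : ℂ)⁻¹ * ∑ x, f x * ZMod.stdAddChar (-(x.1 * m.1 + x.2 * m.2)) := by
  rw [dft]
  congr 1
  refine sum_congr rfl fun x _ => ?_
  congr 1
  rw [AddChar.map_neg_eq_conj, ZMod.stdAddChar_apply, ZMod.toCircle_apply, ← Complex.exp_conj]
  congr 1
  simp only [map_div₀, map_mul, map_natCast, map_ofNat, Complex.conj_ofReal, Complex.conj_I]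
  ring

lemma sum_stdAddChar_mul_conj (x y : ZMod N × ZMod N) :
    ∑ m : ZMod N × ZMod N, ZMod.stdAddChar (-(x.1 * m.1 + x.2 * m.2)) *
        conj (ZMod.stdAddChar (-(y.1 * m.1 + y.2 * m.2))) =
      if x = y then (N : ℂ) ^ 2 else 0 := by
  have hψ := ZMod.isPrimitive_stdAddChar N
  simp_rw [← AddChar.map_neg_eq_conj, ← AddChar.map_add_eq_mul, Fintype.sum_prod_type]
  have (a b : ZMod N) : -(x.1 * a + x.2 * b) + -(-(y.1 * a + y.2 * b)) =
      a * (y.1 - x.1) + b * (y.2 - x.2) := by ring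
  simp_rw [this, AddChar.map_add_eq_mul, ← sum_mul_sum, AddChar.sum_mulShift _ hψ, ZMod.card,
    sub_eq_zero, Prod.ext_iff, eq_comm (a := x.1), eq_comm (a := x.2)]
  split_ifs <;> simp_all [sq]

lemma sum_norm_sq_dft (g : ZMod N × ZMod N → ℂ) :
    ∑ m, ‖dft N g m‖ ^ 2 = ∑ x, ‖g x‖ ^ 2 := by
  have hexpand (m : ZMod N × ZMod N) : dft N g m * conj (dft N g m) =
      ((N : ℂ) ^ 2)⁻¹ * ∑ x, ∑ y, g x * conj (g y) *
        (ZMod.stdAddChar (-(x.1 * m.1 + x.2 * m.2)) *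
          conj (ZMod.stdAddChar (-(y.1 * m.1 + y.2 * m.2)))) := by
    rw [dft_apply_eq_sum_stdAddChar, map_mul, map_inv₀, map_natCast, map_sum,
      mul_mul_mul_comm, sum_mul_sum, ← mul_inv, ← sq]
    simp_rw [map_mul, mul_mul_mul_comm]
  apply Complex.ofReal_injective
  push_cast
  simp_rw [← Complex.mul_conj']
  calc ∑ m, dft N g m * conj (dft N g m)
      = ((N : ℂ) ^ 2)⁻¹ * ∑ x, ∑ y, g x * conj (g y) * ∑ m : ZMod N × ZMod N,
          ZMod.stdAddChar (-(x.1 * m.1 + x.2 * m.2)) *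
            conj (ZMod.stdAddChar (-(y.1 * m.1 + y.2 * m.2))) := by
        simp_rw [hexpand, ← mul_sum]
        congr 1
        simp_rw [mul_sum]
        rw [sum_comm]
        exact sum_congr rfl fun x _ => sum_comm
    _ = ∑ x, g x * conj (g x) := by
        simp_rw [sum_stdAddChar_mul_conj, mul_ite, mul_zero, sum_ite_eq, mem_univ, if_true, mul_sum]
        have hN : (N : ℂ) ≠ 0 := Nat.cast_ne_zero.2 (NeZero.ne N)
        exact sum_congr rfl fun x _ => by field_simp

lemma sum_mul_dft_comm (g f : ZMod N × ZMod N → ℂ) :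
    ∑ m, g m * dft N f m = ∑ x, dft N g x * f x := by
  simp_rw [dft_apply_eq_sum_stdAddChar, mul_sum, sum_mul]
  rw [sum_comm]
  refine sum_congr rfl fun x _ => sum_congr rfl fun m _ => ?_
  rw [show x.1 * m.1 + x.2 * m.2 = m.1 * x.1 + m.2 * x.2 by ring]
  ring

lemma dft_selfConv (k : ZMod N × ZMod N → ℂ) (x : ZMod N × ZMod N) :
    dft N (selfConv k) x = N * dft N k x ^ 2 := by
  have hN : (N : ℂ) ≠ 0 := Nat.cast_ne_zero.2 (NeZero.ne N)
  have hchar (u v : ZMod N × ZMod N) :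
      ZMod.stdAddChar (-((u + v).1 * x.1 + (u + v).2 * x.2)) =
        ZMod.stdAddChar (-(u.1 * x.1 + u.2 * x.2)) *
          ZMod.stdAddChar (-(v.1 * x.1 + v.2 * x.2)) := by
    rw [← AddChar.map_add_eq_mul, Prod.fst_add, Prod.snd_add]
    ring_nf
  calc dft N (selfConv k) x
      = (N : ℂ)⁻¹ * ∑ u, ∑ v, k u * k v *
          ZMod.stdAddChar (-((u + v).1 * x.1 + (u + v).2 * x.2)) := by
        simp_rw [dft_apply_eq_sum_stdAddChar, selfConv, sum_mul]
        rw [sum_comm]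
        refine congrArg _ (sum_congr rfl fun u _ => ?_)
        refine (Fintype.sum_equiv (Equiv.addLeft u) _ _ fun v => ?_).symm
        simp
    _ = N * dft N k x ^ 2 := by
        simp_rw [hchar, dft_apply_eq_sum_stdAddChar, mul_pow, sq (∑ _, _), sum_mul_sum]
        field_simp
        exact sum_congr rfl fun u _ => sum_congr rfl fun v _ => by ring

lemma sum_norm_pow_four_dft (k : ZMod N × ZMod N → ℂ) :
    ∑ x, ‖dft N k x‖ ^ 4 = ((N : ℝ) ^ 2)⁻¹ * ∑ z, ‖selfConv k z‖ ^ 2 := by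
  have hN : (N : ℝ) ≠ 0 := Nat.cast_ne_zero.2 (NeZero.ne N)
  have hpoint (x : ZMod N × ZMod N) :
      ‖dft N k x‖ ^ 4 = ((N : ℝ) ^ 2)⁻¹ * ‖dft N (selfConv k) x‖ ^ 2 := by
    rw [dft_selfConv, norm_mul, norm_pow, Complex.norm_natCast]
    field_simp
  rw [← sum_norm_sq_dft (selfConv k), mul_sum]
  exact sum_congr rfl fun x _ => hpoint x

end Fourier

section Restriction

variable {N : ℕ} [NeZero N]

lemma sum_norm_pow_four_dft_le (hN : Squarefree N) (k : ZMod N × ZMod N → ℂ)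
    (hk : ∀ m ∉ parabola N, k m = 0) :
    ∑ x, ‖dft N k x‖ ^ 4 ≤
      ((N : ℝ) ^ 2)⁻¹ * 2 ^ N.primeFactors.card * (∑ m, ‖k m‖ ^ 2) ^ 2 := by
  rw [sum_norm_pow_four_dft, mul_assoc]
  gcongr
  exact_mod_cast sum_norm_sq_selfConv_le _ k hk _ (card_filter_parabola_sub_mem_le hN)

lemma norm_sum_mul_dft_le (k f : ZMod N × ZMod N → ℂ) :
    ‖∑ m, k m * dft N f m‖ ≤
      (∑ x, ‖dft N k x‖ ^ 4) ^ (1 / 4 : ℝ) * (∑ x, ‖f x‖ ^ (4 / 3 : ℝ)) ^ (3 / 4 : ℝ) := by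
  have hpq : (4 : ℝ).HolderConjugate (4 / 3) :=
    (Real.holderConjugate_iff_eq_conjExponent (by norm_num)).2 (by norm_num)
  rw [sum_mul_dft_comm]
  calc ‖∑ x, dft N k x * f x‖
      ≤ ∑ x, ‖dft N k x‖ * ‖f x‖ := (norm_sum_le _ _).trans_eq (by simp_rw [norm_mul])
    _ ≤ (∑ x, ‖dft N k x‖ ^ (4 : ℝ)) ^ (1 / 4 : ℝ) *
          (∑ x, ‖f x‖ ^ (4 / 3 : ℝ)) ^ (1 / (4 / 3) : ℝ) :=
        Real.inner_le_Lp_mul_Lq_of_nonneg _ hpq (fun _ _ => norm_nonneg _)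
          fun _ _ => norm_nonneg _
    _ = _ := by norm_num

lemma sum_parabola_norm_sq_dft_le (hN : Squarefree N) (f : ZMod N × ZMod N → ℂ) :
    ∑ m ∈ parabola N, ‖dft N f m‖ ^ 2 ≤
      (((N : ℝ) ^ 2)⁻¹ * 2 ^ N.primeFactors.card * (∑ m ∈ parabola N, ‖dft N f m‖ ^ 2) ^ 2) ^
        (1 / 4 : ℝ) * (∑ x, ‖f x‖ ^ (4 / 3 : ℝ)) ^ (3 / 4 : ℝ) := by
  set k : ZMod N × ZMod N → ℂ := fun m => if m ∈ parabola N then conj (dft N f m) else 0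
  have hk (m) (hm : m ∉ parabola N) : k m = 0 := if_neg hm
  have hk_norm : ∑ m, ‖k m‖ ^ 2 = ∑ m ∈ parabola N, ‖dft N f m‖ ^ 2 := by
    simp [k, apply_ite, sum_ite_mem]
  have hk_pair : ∑ m, k m * dft N f m = (∑ m ∈ parabola N, ‖dft N f m‖ ^ 2 : ℝ) := by
    simp [k, ite_mul, sum_ite_mem, Complex.conj_mul']
  calc ∑ m ∈ parabola N, ‖dft N f m‖ ^ 2
      = ‖∑ m, k m * dft N f m‖ := by
        rw [hk_pair, Complex.norm_real, Real.norm_of_nonneg (by positivity)]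
    _ ≤ _ := (norm_sum_mul_dft_le k f).trans <| by
        rw [← hk_norm]
        gcongr
        exact sum_norm_pow_four_dft_le hN k hk

end Restriction

lemma rpow_half_le_of_le_rpow_quarter_mul {n K S T : ℝ} (hn : 0 < n) (hK : 0 ≤ K) (hS : 0 ≤ S)
    (hT : 0 ≤ T) (h : S ≤ ((n ^ 2)⁻¹ * K * S ^ 2) ^ (1 / 4 : ℝ) * T) :
    (n⁻¹ * S) ^ (1 / 2 : ℝ) ≤ K ^ (1 / 4 : ℝ) * n⁻¹ * T := by
  set y := (n⁻¹ * S) ^ (1 / 2 : ℝ)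
  have hy : 0 ≤ y := by positivity
  have hy_sq : y ^ 2 = n⁻¹ * S := by
    rw [← Real.rpow_natCast, ← Real.rpow_mul (by positivity)]
    norm_num
  have hquarter : ((n ^ 2)⁻¹ * K * S ^ 2) ^ (1 / 4 : ℝ) = K ^ (1 / 4 : ℝ) * y := by
    have : (n ^ 2)⁻¹ * K * S ^ 2 = K * y ^ 4 := by
      rw [show y ^ 4 = (y ^ 2) ^ 2 by ring, hy_sq]
      ring
    rw [this, Real.mul_rpow hK (by positivity), show (1 / 4 : ℝ) = ((4 : ℕ) : ℝ)⁻¹ by norm_num,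
      Real.pow_rpow_inv_natCast hy (by norm_num)]
  rw [hquarter] at h
  have : y ^ 2 ≤ K ^ (1 / 4 : ℝ) * n⁻¹ * T * y := by
    rw [hy_sq]
    calc n⁻¹ * S ≤ n⁻¹ * (K ^ (1 / 4 : ℝ) * y * T) := by gcongr
      _ = _ := by ring
  nlinarith [show 0 ≤ K ^ (1 / 4 : ℝ) * n⁻¹ * T by positivity]

theorem restriction_squarefree (N : ℕ) [NeZero N] (hN : Squarefree N)
    (f : ZMod N × ZMod N → ℂ) :
    (((parabola N).card : ℝ)⁻¹ *
        ∑ m ∈ parabola N, ‖dft N f m‖ ^ 2) ^ ((1 : ℝ) / 2) ≤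
      (2 : ℝ) ^ ((N.primeFactors.card : ℝ) / 4) * (N : ℝ)⁻¹ *
        (∑ x : ZMod N × ZMod N, ‖f x‖ ^ ((4 : ℝ) / 3)) ^ ((3 : ℝ) / 4) := by
  have hpow : (2 : ℝ) ^ ((N.primeFactors.card : ℝ) / 4) =
      ((2 : ℝ) ^ N.primeFactors.card) ^ (1 / 4 : ℝ) := by
    rw [← Real.rpow_natCast, ← Real.rpow_mul (by norm_num)]
    ring_nf
  rw [card_parabola, hpow]
  exact rpow_half_le_of_le_rpow_quarter_mul (mod_cast Nat.pos_of_neZero N) (by positivity)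
    (by positivity) (by positivity) (sum_parabola_norm_sq_dft_le hN f)
end

section
/- Let N be a squarefree positive integer and let Σ = {(t, t²) : t ∈ ℤ/Nℤ} be the parabola in (ℤ/Nℤ)². Then for every subset U ⊆ Σ, the additive energy satisfies E(U) ≤ 2^{ω(N)} · |U|², where ω(N) is the number of distinct prime divisors of N. -/
open scoped BigOperators

/-!
If `(a, a²) + (b, b²) = (c, c²) + (d, d²)`, then `b = c + d - a` and `2 (a - c) (a - d) = 0`, so a
representation of a sum of two points of the parabola is determined by a root of
`2 (x - c) (x - d)`. For squarefree `N` the Chinese remainder theorem splits `ℤ/Nℤ` into the fields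
`ℤ/pℤ`, `p ∣ N`, each of which has at most two such roots (for `p = 2` because `ℤ/2ℤ` has only two
elements), so every sum has at most `2^ω(N)` representations. Summing over the `|U|²` choices of
`(c, c²), (d, d²) ∈ U` bounds the energy.
-/

open Finset

section CommRing

variable {R : Type*} [CommRing R]

theorem two_mul_sub_mul_sub_eq_zero_of_add_eq_of_sq_add_sq_eq {a b c d : R}
    (h₁ : a + b = c + d) (h₂ : a ^ 2 + b ^ 2 = c ^ 2 + d ^ 2) :
    2 * (a - c) * (a - d) = 0 := by
  obtain rfl : b = c + d - a := by linear_combination h₁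
  linear_combination h₂

variable [Fintype R] [DecidableEq R]

theorem card_filter_add_eq_le_of_subset_parabola {U : Finset (R × R)}
    (hU : (U : Set (R × R)) ⊆ Set.range fun t => (t, t ^ 2)) (c d : R) :
    #{p ∈ U ×ˢ U | p.1 + p.2 = (c, c ^ 2) + (d, d ^ 2)} ≤
      #{x : R | 2 * (x - c) * (x - d) = 0} := by
  have on_parabola : ∀ P ∈ U, P = (P.1, P.1 ^ 2) := fun P hP => by
    obtain ⟨t, rfl⟩ := hU hP
    rfl
  refine card_le_card_of_injOn (fun p => p.1.1) (fun p hp => ?_) (fun p hp p' hp' h => ?_)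
  · simp only [coe_filter, mem_product, Set.mem_ofPred_eq] at hp
    obtain ⟨⟨hP, hQ⟩, hsum⟩ := hp
    rw [on_parabola _ hP, on_parabola _ hQ] at hsum
    simp only [coe_filter, mem_univ, true_and, Set.mem_ofPred_eq]
    exact two_mul_sub_mul_sub_eq_zero_of_add_eq_of_sq_add_sq_eq
      (congrArg Prod.fst hsum) (congrArg Prod.snd hsum)
  · simp only [coe_filter, mem_product, Set.mem_ofPred_eq] at hp hp'
    have hfst : p.1 = p'.1 := by
      rw [on_parabola _ hp.1.1, on_parabola _ hp'.1.1, show p.1.1 = p'.1.1 from h]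
    have hsnd : p.2 = p'.2 := add_left_cancel (hfst ▸ hp.2.trans hp'.2.symm)
    exact Prod.ext hfst hsnd

theorem card_filter_two_mul_sub_mul_sub_eq_zero_le_two [IsDomain R] (h2 : (2 : R) ≠ 0)
    (c d : R) : #{x : R | 2 * (x - c) * (x - d) = 0} ≤ 2 := by
  refine (card_le_card fun x hx => ?_).trans (card_le_two (a := c) (b := d))
  simp only [mem_filter, mem_univ, true_and, mul_eq_zero, h2, false_or, sub_eq_zero] at hx
  rcases hx with rfl | rfl <;> simp

theorem card_filter_two_mul_sub_mul_sub_eq_zero_congr {S : Type*} [CommRing S] [Fintype S]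
    [DecidableEq S] (e : R ≃+* S) (c d : R) :
    #{x : R | 2 * (x - c) * (x - d) = 0} = #{y : S | 2 * (y - e c) * (y - e d) = 0} :=
  card_equiv e.toEquiv fun x => by
    simp only [mem_filter, mem_univ, true_and, RingEquiv.toEquiv_eq_coe, EquivLike.coe_coe,
      ← map_sub, ← map_ofNat e 2, ← map_mul, map_eq_zero_iff e e.injective]

end CommRing

theorem card_filter_two_mul_sub_mul_sub_eq_zero_pi {ι : Type*} [Fintype ι] [DecidableEq ι]
    {S : ι → Type*} [∀ i, CommRing (S i)] [∀ i, Fintype (S i)] [∀ i, DecidableEq (S i)]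
    (c d : ∀ i, S i) :
    #{x : ∀ i, S i | 2 * (x - c) * (x - d) = 0} =
      ∏ i, #{y : S i | 2 * (y - c i) * (y - d i) = 0} := by
  rw [← Fintype.card_piFinset]
  congr 1
  ext x
  simp [funext_iff]

namespace ZMod

theorem card_filter_two_mul_sub_mul_sub_eq_zero_le_two (p : ℕ) [Fact p.Prime] (c d : ZMod p) :
    #{x : ZMod p | 2 * (x - c) * (x - d) = 0} ≤ 2 := by
  by_cases hp : p = 2
  · subst hp
    exact (card_filter_le _ _).trans (by simp)
  · refine _root_.card_filter_two_mul_sub_mul_sub_eq_zero_le_two ?_ c d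
    intro h2
    exact hp ((Nat.prime_dvd_prime_iff_eq Fact.out Nat.prime_two).1
      ((natCast_eq_zero_iff 2 p).1 (mod_cast h2)))

noncomputable def equivPiPrimeFactors {N : ℕ} (hN : Squarefree N) :
    ZMod N ≃+* ∀ p : N.primeFactors, ZMod p :=
  (ringEquivCongr ((Nat.prod_primeFactors_of_squarefree hN).symm.trans
    (prod_coe_sort N.primeFactors id).symm)).trans
    (prodEquivPi (fun p : N.primeFactors => (p : ℕ)) fun p q hpq =>
      (Nat.coprime_primes (Nat.prime_of_mem_primeFactors p.2)
        (Nat.prime_of_mem_primeFactors q.2)).2 (Subtype.coe_ne_coe.2 hpq))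

theorem card_filter_two_mul_sub_mul_sub_eq_zero_le {N : ℕ} [NeZero N] (hN : Squarefree N)
    (c d : ZMod N) :
    #{x : ZMod N | 2 * (x - c) * (x - d) = 0} ≤ 2 ^ N.primeFactors.card := by
  have (p : N.primeFactors) : Fact (p : ℕ).Prime := ⟨Nat.prime_of_mem_primeFactors p.2⟩
  rw [card_filter_two_mul_sub_mul_sub_eq_zero_congr (equivPiPrimeFactors hN),
    card_filter_two_mul_sub_mul_sub_eq_zero_pi, ← Fintype.card_coe, ← card_univ]
  exact prod_le_pow_card _ _ _ fun p _ => card_filter_two_mul_sub_mul_sub_eq_zero_le_two p _ _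

end ZMod

theorem card_filter_add_eq_add_le_mul_card_sq {G : Type*} [Add G] [DecidableEq G]
    (U : Finset G) {K : ℕ}
    (hK : ∀ q ∈ U ×ˢ U, #{p ∈ U ×ˢ U | p.1 + p.2 = q.1 + q.2} ≤ K) :
    #{p ∈ (U ×ˢ U) ×ˢ (U ×ˢ U) | p.1.1 + p.1.2 = p.2.1 + p.2.2} ≤ K * #U ^ 2 := by
  rw [card_filter, sum_product_right]
  simp only [← card_filter]
  calc _ ≤ ∑ _q ∈ U ×ˢ U, K := sum_le_sum hK
    _ = K * #U ^ 2 := by rw [sum_const, card_product, smul_eq_mul, sq, mul_comm]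

theorem additive_energy_parabola (N : ℕ) [NeZero N] (hN : Squarefree N)
    (U : Finset (ZMod N × ZMod N)) (hU : U ⊆ parabola N) :
    (((U ×ˢ U) ×ˢ (U ×ˢ U)).filter
        (fun p => p.1.1 + p.1.2 = p.2.1 + p.2.2)).card ≤
      2 ^ N.primeFactors.card * U.card ^ 2 := by
  have hU' : (U : Set (ZMod N × ZMod N)) ⊆ Set.range fun t => (t, t ^ 2) := by
    simpa [parabola] using coe_subset.2 hU
  refine card_filter_add_eq_add_le_mul_card_sq U fun q hq => ?_
  obtain ⟨hx, hy⟩ := mem_product.1 hq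
  obtain ⟨c, hc⟩ := hU' hx
  obtain ⟨d, hd⟩ := hU' hy
  rw [← hc, ← hd]
  exact (card_filter_add_eq_le_of_subset_parabola hU' c d).trans
    (ZMod.card_filter_two_mul_sub_mul_sub_eq_zero_le hN c d)
end

section
/- For every ε > 0 there exists a constant C_ε > 0 such that for every squarefree positive integer N and every function f : (ℤ/Nℤ)² → ℂ whose Fourier transform f̂ is supported in the parabola Σ = {(t, t²) : t ∈ ℤ/Nℤ}, one has ( (1/N²) · Σ_{x∈(ℤ/Nℤ)²} |f(x)|⁴ )^{1/4} ≤ C_ε · N^{ε} · ( (1/N²) · Σ_{x∈(ℤ/Nℤ)²} |f(x)|² )^{1/2}. -/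
open scoped BigOperators

/-! If `f̂` vanishes off the parabola, `f` is an exponential sum `∑ₜ c(t) e(x·(t,t²)/N)`, so `f²`
is the exponential sum with coefficients `G(s) = ∑ c(t₁) c(t₂)` over the pairs with
`(t₁ + t₂, t₁² + t₂²) = s`. Plancherel turns `‖f‖₄⁴ = ‖f²‖₂²` into `N² ∑ₛ |G(s)|²`. Modulo an odd
prime the fibre of `(t₁, t₂) ↦ (t₁ + t₂, t₁² + t₂²)` through a pair consists of the pair and its
swap, so by the Chinese remainder theorem the fibres have at most `2^ω(N)` points when `N` is
squarefree. Cauchy–Schwarz on each fibre then gives `‖f‖₄⁴ ≤ 2^ω(N) N⁻² ‖f‖₂⁴`, and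
`2^ω(N) ≪_δ N^δ` since only the primes below `2^{1/δ}` have `p^δ < 2`. -/

open Finset Function

section Plancherel

variable {G 𝕜 : Type*} [AddCommGroup G] [Fintype G] [RCLike 𝕜]

theorem AddChar.sum_apply_mul_conj_eq_ite [DecidableEq (AddChar G 𝕜)] (ψ φ : AddChar G 𝕜) :
    ∑ x, ψ x * starRingEnd 𝕜 (φ x) = if ψ = φ then (Fintype.card G : 𝕜) else 0 := by
  simp_rw [← AddChar.inv_apply_eq_conj, ← div_eq_mul_inv, ← AddChar.div_apply']
  rw [AddChar.sum_eq_ite]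
  exact if_congr div_eq_one rfl rfl

theorem AddChar.sum_norm_sq_sum_mul {ι : Type*} [Fintype ι] {χ : ι → AddChar G 𝕜}
    (hχ : Injective χ) (g : ι → 𝕜) :
    ∑ x, ‖∑ i, g i * χ i x‖ ^ 2 = Fintype.card G * ∑ i, ‖g i‖ ^ 2 := by
  classical
  rw [← RCLike.ofReal_inj (K := 𝕜)]
  simp only [RCLike.ofReal_sum, RCLike.ofReal_mul, RCLike.ofReal_pow, RCLike.ofReal_natCast]
  rw [sum_congr rfl fun x _ => (RCLike.mul_conj _).symm,
    sum_congr rfl fun i _ => (RCLike.mul_conj (g i)).symm]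
  simp_rw [map_sum, map_mul, sum_mul_sum, mul_sum]
  rw [sum_comm]
  refine sum_congr rfl fun i _ => ?_
  rw [sum_comm]
  have factor (j : ι) : ∑ x, g i * χ i x * (starRingEnd 𝕜 (g j) * starRingEnd 𝕜 (χ j x)) =
      g i * starRingEnd 𝕜 (g j) * ∑ x, χ i x * starRingEnd 𝕜 (χ j x) := by
    rw [mul_sum]; exact sum_congr rfl fun x _ => by ring
  simp_rw [factor, AddChar.sum_apply_mul_conj_eq_ite, hχ.eq_iff, mul_ite, mul_zero,
    sum_ite_eq, mem_univ, if_true]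
  ring

end Plancherel

theorem sum_norm_sq_sum_fiberwise_le {α β E : Type*} [Fintype α] [Fintype β] [DecidableEq β]
    [SeminormedAddCommGroup E] (σ : α → β) {R : ℕ} (hR : ∀ b, #{a | σ a = b} ≤ R) (w : α → E) :
    ∑ b, ‖∑ a with σ a = b, w a‖ ^ 2 ≤ R * ∑ a, ‖w a‖ ^ 2 := by
  rw [← sum_fiberwise univ σ fun a => ‖w a‖ ^ 2, mul_sum]
  refine sum_le_sum fun b _ => ?_
  calc ‖∑ a with σ a = b, w a‖ ^ 2 ≤ (∑ a with σ a = b, ‖w a‖) ^ 2 := by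
        gcongr; exact norm_sum_le _ _
    _ ≤ #{a | σ a = b} * ∑ a with σ a = b, ‖w a‖ ^ 2 := sq_sum_le_card_mul_sum_sq
    _ ≤ R * ∑ a with σ a = b, ‖w a‖ ^ 2 := by gcongr; exact hR b

theorem Real.two_le_rpow_of_two_rpow_inv_le {δ : ℝ} (hδ : 0 < δ) {x : ℝ} (hx : 2 ^ δ⁻¹ ≤ x) :
    2 ≤ x ^ δ :=
  calc (2 : ℝ) = (2 ^ δ⁻¹) ^ δ := by
        rw [← Real.rpow_mul zero_le_two, inv_mul_cancel₀ hδ.ne', Real.rpow_one]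
    _ ≤ x ^ δ := by gcongr

theorem Nat.exists_two_pow_card_primeFactors_le {δ : ℝ} (hδ : 0 < δ) :
    ∃ C : ℝ, 0 < C ∧ ∀ n : ℕ, n ≠ 0 → (2 : ℝ) ^ #n.primeFactors ≤ C * (n : ℝ) ^ δ := by
  set B := ⌈(2 : ℝ) ^ δ⁻¹⌉₊
  refine ⟨2 ^ B, by positivity, fun n hn => ?_⟩
  have small : ∏ p ∈ n.primeFactors with p < B, (2 : ℝ) ≤ 2 ^ B := by
    rw [prod_const]
    refine pow_le_pow_right₀ one_le_two ?_
    calc #{p ∈ n.primeFactors | p < B} ≤ #(range B) :=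
          card_le_card fun p hp => mem_range.2 (mem_filter.1 hp).2
      _ = B := card_range B
  have large : ∏ p ∈ n.primeFactors with ¬p < B, (2 : ℝ) ≤ (n : ℝ) ^ δ :=
    calc ∏ p ∈ n.primeFactors with ¬p < B, (2 : ℝ)
        ≤ ∏ p ∈ n.primeFactors with ¬p < B, (p : ℝ) ^ δ :=
          prod_le_prod (fun _ _ => zero_le_two) fun p hp =>
            Real.two_le_rpow_of_two_rpow_inv_le hδ
              ((Nat.le_ceil _).trans (by exact_mod_cast not_lt.1 (mem_filter.1 hp).2))
      _ = ((∏ p ∈ n.primeFactors with ¬p < B, p : ℕ) : ℝ) ^ δ := by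
          rw [Nat.cast_prod, Real.finsetProd_rpow _ _ fun p _ => by positivity]
      _ ≤ (n : ℝ) ^ δ := by
          gcongr
          exact_mod_cast Nat.le_of_dvd (Nat.pos_of_ne_zero hn)
            ((prod_dvd_prod_of_subset _ _ id (filter_subset _ _)).trans
              (Nat.prod_primeFactors_dvd n))
  calc (2 : ℝ) ^ #n.primeFactors
      = (∏ p ∈ n.primeFactors with p < B, (2 : ℝ)) * ∏ p ∈ n.primeFactors with ¬p < B, (2 : ℝ) := by
        rw [prod_filter_mul_prod_filter_not, prod_const]
    _ ≤ 2 ^ B * (n : ℝ) ^ δ := by gcongr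

section ParabolaSum

variable {R : Type*} [CommRing R]

def parabolaSum (p : R × R) : R × R := (p.1, p.1 ^ 2) + (p.2, p.2 ^ 2)

theorem eq_or_eq_swap_of_parabolaSum_eq [IsDomain R] (h2 : (2 : R) ≠ 0) {p q : R × R}
    (h : parabolaSum p = parabolaSum q) : p = q ∨ p = q.swap := by
  obtain ⟨hsum, hsq⟩ := Prod.ext_iff.1 h
  simp only [parabolaSum, Prod.fst_add, Prod.snd_add] at hsum hsq
  have key : 2 * ((p.1 - q.1) * (p.1 - q.2)) = 0 := by
    linear_combination hsq - (p.2 - p.1 + q.1 + q.2) * hsum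
  rcases mul_eq_zero.1 ((mul_eq_zero.1 key).resolve_left h2) with h1 | h1
  · left
    have h1 := sub_eq_zero.1 h1
    exact Prod.ext h1 (by linear_combination hsum - h1)
  · right
    have h1 := sub_eq_zero.1 h1
    exact Prod.ext h1 (by simp only [Prod.snd_swap]; linear_combination hsum - h1)

variable [Fintype R] [DecidableEq R]

theorem card_filter_parabolaSum_eq_le_two_of_two_ne_zero [IsDomain R] (h2 : (2 : R) ≠ 0)
    (s : R × R) : #{p | parabolaSum p = s} ≤ 2 := by
  rcases (filter (fun p => parabolaSum p = s) univ).eq_empty_or_nonempty with hempty | ⟨q, hq⟩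
  · simp [hempty]
  calc #{p | parabolaSum p = s} ≤ #{q, q.swap} := card_le_card fun p hp => by
        have hpq := (mem_filter.1 hp).2.trans (mem_filter.1 hq).2.symm
        rcases eq_or_eq_swap_of_parabolaSum_eq h2 hpq with rfl | rfl <;> simp
    _ ≤ 2 := card_le_two

theorem card_filter_parabolaSum_eq_le_card (s : R × R) :
    #{p | parabolaSum p = s} ≤ Fintype.card R :=
  card_le_card_of_injOn Prod.fst (fun _ _ => mem_coe.2 (mem_univ _)) fun p hp q hq hpq => by
    have hp := congrArg Prod.fst (mem_filter.1 hp).2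
    have hq := congrArg Prod.fst (mem_filter.1 hq).2
    simp only [parabolaSum, Prod.fst_add] at hp hq
    exact Prod.ext hpq (by linear_combination hp - hq - hpq)

theorem card_filter_parabolaSum_eq_le_prod {ι : Type*} [Fintype ι] [DecidableEq ι]
    {S : ι → Type*} [∀ i, CommRing (S i)] [∀ i, Fintype (S i)] [∀ i, DecidableEq (S i)]
    (e : R →+* Π i, S i) (he : Injective e) (s : R × R) :
    #{p | parabolaSum p = s} ≤ ∏ i, #{q | parabolaSum q = (e s.1 i, e s.2 i)} := by
  rw [← Fintype.card_piFinset]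
  refine card_le_card_of_injOn (fun p i => (e p.1 i, e p.2 i)) (fun p hp => ?_)
    fun p _ q _ hpq => ?_
  · rw [← (mem_filter.1 hp).2]
    simp [parabolaSum]
  · have h1 : e p.1 = e q.1 := funext fun i => congrArg Prod.fst (congrFun hpq i)
    have h2 : e p.2 = e q.2 := funext fun i => congrArg Prod.snd (congrFun hpq i)
    exact Prod.ext (he h1) (he h2)

end ParabolaSum

theorem ZMod.card_filter_parabolaSum_eq_le_two {p : ℕ} [Fact p.Prime] (s : ZMod p × ZMod p) :
    #{q | parabolaSum q = s} ≤ 2 := by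
  rcases eq_or_ne p 2 with rfl | hp2
  · exact (card_filter_parabolaSum_eq_le_card s).trans (ZMod.card 2).le
  · exact card_filter_parabolaSum_eq_le_two_of_two_ne_zero
      (Ring.two_ne_zero ((ZMod.ringChar_zmod_n p).trans_ne hp2)) s

instance {N : ℕ} (p : N.primeFactors) : Fact (p : ℕ).Prime :=
  ⟨Nat.prime_of_mem_primeFactors p.2⟩

noncomputable def ZMod.equivPiPrimeFactors_s8 {N : ℕ} (hN : Squarefree N) :
    ZMod N ≃+* Π p : N.primeFactors, ZMod p :=
  (ZMod.ringEquivCongr ((prod_attach N.primeFactors id).trans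
      (Nat.prod_primeFactors_of_squarefree hN)).symm).trans
    (ZMod.prodEquivPi (fun p : N.primeFactors => (p : ℕ)) fun p q hpq =>
      (Nat.coprime_primes (Nat.prime_of_mem_primeFactors p.2)
        (Nat.prime_of_mem_primeFactors q.2)).2 (Subtype.coe_injective.ne hpq))

theorem ZMod.card_filter_parabolaSum_eq_le {N : ℕ} [NeZero N] (hN : Squarefree N)
    (s : ZMod N × ZMod N) : #{p | parabolaSum p = s} ≤ 2 ^ #N.primeFactors :=
  calc #{p | parabolaSum p = s}
      ≤ ∏ q : N.primeFactors, #{p | parabolaSum p = ((equivPiPrimeFactors_s8 hN) s.1 q,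
          (equivPiPrimeFactors_s8 hN) s.2 q)} :=
        card_filter_parabolaSum_eq_le_prod (equivPiPrimeFactors_s8 hN).toRingHom
          (equivPiPrimeFactors_s8 hN).injective s
    _ ≤ ∏ _q : N.primeFactors, 2 := prod_le_prod' fun q _ => card_filter_parabolaSum_eq_le_two _
    _ = 2 ^ #N.primeFactors := by simp

section DotChar

variable {N : ℕ} [NeZero N]

noncomputable def dotChar (s : ZMod N × ZMod N) : AddChar (ZMod N × ZMod N) ℂ where
  toFun x := ZMod.stdAddChar (x.1 * s.1 + x.2 * s.2)
  map_zero_eq_one' := by simp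
  map_add_eq_mul' x y := by
    rw [← AddChar.map_add_eq_mul]
    congr 1
    simp only [Prod.fst_add, Prod.snd_add]
    ring

theorem dotChar_apply (s x : ZMod N × ZMod N) :
    dotChar s x = ZMod.stdAddChar (x.1 * s.1 + x.2 * s.2) := rfl

theorem dotChar_comm (s x : ZMod N × ZMod N) : dotChar s x = dotChar x s := by
  simp only [dotChar_apply, mul_comm]

theorem dotChar_add (s t x : ZMod N × ZMod N) :
    dotChar (s + t) x = dotChar s x * dotChar t x := by
  rw [dotChar_comm, AddChar.map_add_eq_mul, dotChar_comm s, dotChar_comm t]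

theorem dotChar_injective : Injective (dotChar : ZMod N × ZMod N → AddChar _ ℂ) := by
  intro s t h
  have h1 := DFunLike.congr_fun h (1, 0)
  have h2 := DFunLike.congr_fun h (0, 1)
  simp only [dotChar_apply, one_mul, zero_mul, add_zero, zero_add,
    ZMod.injective_stdAddChar.eq_iff] at h1 h2
  exact Prod.ext h1 h2

theorem sum_dotChar_apply (x : ZMod N × ZMod N) :
    ∑ s, dotChar s x = if x = 0 then (N : ℂ) ^ 2 else 0 := by
  classical
  simp_rw [dotChar_comm _ x]
  rw [AddChar.sum_eq_ite]
  have hzero : dotChar (0 : ZMod N × ZMod N) = 0 := by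
    ext x
    simp [dotChar_apply]
  simp only [← hzero, dotChar_injective.eq_iff, Fintype.card_prod, ZMod.card, Nat.cast_mul, sq]

theorem dft_eq_sum_dotChar (f : ZMod N × ZMod N → ℂ) (m : ZMod N × ZMod N) :
    dft N f m = (N : ℂ)⁻¹ * ∑ x, f x * dotChar (-m) x := by
  rw [dft]
  congr 1
  refine sum_congr rfl fun x _ => ?_
  rw [dotChar_apply, Prod.fst_neg, Prod.snd_neg, mul_neg, mul_neg, ← neg_add,
    AddChar.map_neg_eq_inv, ZMod.stdAddChar_apply, ZMod.toCircle_apply, ← Complex.exp_neg]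
  ring_nf

theorem dotChar_neg_mul_dotChar (m x y : ZMod N × ZMod N) :
    dotChar (-m) y * dotChar m x = dotChar m (x - y) := by
  rw [dotChar_apply, dotChar_apply, dotChar_apply, ← AddChar.map_add_eq_mul]
  congr 1
  simp only [Prod.fst_neg, Prod.snd_neg, Prod.fst_sub, Prod.snd_sub]
  ring

theorem dft_inversion (f : ZMod N × ZMod N → ℂ) (x : ZMod N × ZMod N) :
    (N : ℂ)⁻¹ * ∑ m, dft N f m * dotChar m x = f x := by
  have hN : (N : ℂ) ≠ 0 := Nat.cast_ne_zero.2 (NeZero.ne N)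
  simp_rw [dft_eq_sum_dotChar, mul_assoc, sum_mul, mul_assoc, dotChar_neg_mul_dotChar, ← mul_sum]
  rw [sum_comm]
  simp_rw [← mul_sum, sum_dotChar_apply, sub_eq_zero, mul_ite, mul_zero, sum_ite_eq, mem_univ,
    if_true]
  field_simp

end DotChar

section ParabolaExtension

variable {N : ℕ} [NeZero N]

theorem exists_eq_sum_parabola_of_dft_eq_zero {f : ZMod N × ZMod N → ℂ}
    (hsupp : ∀ m, m ∉ parabola N → dft N f m = 0) :
    ∃ c : ZMod N → ℂ, f = fun x => ∑ t, c t * dotChar (t, t ^ 2) x := by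
  refine ⟨fun t => (N : ℂ)⁻¹ * dft N f (t, t ^ 2), funext fun x => ?_⟩
  rw [← dft_inversion f x, mul_sum, ← sum_subset (subset_univ (parabola N)) fun m _ hm => by
    rw [hsupp m hm, zero_mul, mul_zero], parabola, sum_image fun t _ t' _ h => congrArg Prod.fst h]
  simp_rw [mul_assoc]

theorem sum_parabola_sq (c : ZMod N → ℂ) (x : ZMod N × ZMod N) :
    (∑ t, c t * dotChar (t, t ^ 2) x) ^ 2 =
      ∑ s, (∑ p with parabolaSum p = s, c p.1 * c p.2) * dotChar s x := by
  have hterm (p : ZMod N × ZMod N) :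
      c p.1 * dotChar (p.1, p.1 ^ 2) x * (c p.2 * dotChar (p.2, p.2 ^ 2) x) =
        c p.1 * c p.2 * dotChar (parabolaSum p) x := by
    rw [parabolaSum, dotChar_add]
    ring
  rw [sq, sum_mul_sum, ← Fintype.sum_prod_type']
  simp_rw [hterm]
  rw [← sum_fiberwise univ parabolaSum]
  refine sum_congr rfl fun s _ => ?_
  rw [sum_mul]
  exact sum_congr rfl fun p hp => by rw [(mem_filter.1 hp).2]

theorem sum_norm_sq_sum_parabola (c : ZMod N → ℂ) :
    ∑ x, ‖∑ t, c t * dotChar (t, t ^ 2) x‖ ^ 2 = (N : ℝ) ^ 2 * ∑ t, ‖c t‖ ^ 2 := by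
  rw [AddChar.sum_norm_sq_sum_mul (χ := fun t : ZMod N => dotChar (t, t ^ 2))
    (dotChar_injective.comp fun t t' h => congrArg Prod.fst h)]
  simp [sq]

theorem sum_norm_pow_four_sum_parabola_le (hN : Squarefree N) (c : ZMod N → ℂ) :
    ∑ x, ‖∑ t, c t * dotChar (t, t ^ 2) x‖ ^ 4 ≤
      2 ^ #N.primeFactors * (N : ℝ) ^ 2 * (∑ t, ‖c t‖ ^ 2) ^ 2 :=
  calc ∑ x, ‖∑ t, c t * dotChar (t, t ^ 2) x‖ ^ 4
      = ∑ x, ‖∑ s, (∑ p with parabolaSum p = s, c p.1 * c p.2) * dotChar s x‖ ^ 2 := by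
        simp_rw [← sum_parabola_sq, norm_pow, ← pow_mul]
    _ = (N : ℝ) ^ 2 * ∑ s, ‖∑ p with parabolaSum p = s, c p.1 * c p.2‖ ^ 2 := by
        rw [AddChar.sum_norm_sq_sum_mul dotChar_injective]
        simp [sq]
    _ ≤ (N : ℝ) ^ 2 * ((2 ^ #N.primeFactors : ℕ) * ∑ p : ZMod N × ZMod N, ‖c p.1 * c p.2‖ ^ 2) := by
        gcongr
        exact sum_norm_sq_sum_fiberwise_le _ (ZMod.card_filter_parabolaSum_eq_le hN) _
    _ = 2 ^ #N.primeFactors * (N : ℝ) ^ 2 * (∑ t, ‖c t‖ ^ 2) ^ 2 := by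
        simp_rw [norm_mul, mul_pow]
        rw [Fintype.sum_prod_type]
        dsimp only
        rw [← sum_mul_sum]
        push_cast
        ring

theorem sum_norm_pow_four_le_of_dft_eq_zero (hN : Squarefree N) {f : ZMod N × ZMod N → ℂ}
    (hsupp : ∀ m, m ∉ parabola N → dft N f m = 0) :
    ((N : ℝ) ^ 2)⁻¹ * ∑ x, ‖f x‖ ^ 4 ≤
      2 ^ #N.primeFactors * (((N : ℝ) ^ 2)⁻¹ * ∑ x, ‖f x‖ ^ 2) ^ 2 := by
  obtain ⟨c, rfl⟩ := exists_eq_sum_parabola_of_dft_eq_zero hsupp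
  have hN0 : (N : ℝ) ≠ 0 := Nat.cast_ne_zero.2 (NeZero.ne N)
  rw [sum_norm_sq_sum_parabola, inv_mul_cancel_left₀ (pow_ne_zero 2 hN0)]
  calc ((N : ℝ) ^ 2)⁻¹ * ∑ x, ‖∑ t, c t * dotChar (t, t ^ 2) x‖ ^ 4
      ≤ ((N : ℝ) ^ 2)⁻¹ * (2 ^ #N.primeFactors * (N : ℝ) ^ 2 * (∑ t, ‖c t‖ ^ 2) ^ 2) := by
        gcongr
        exact sum_norm_pow_four_sum_parabola_le hN c
    _ = 2 ^ #N.primeFactors * (∑ t, ‖c t‖ ^ 2) ^ 2 := by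
        field_simp

end ParabolaExtension

theorem extension_dual (ε : ℝ) (hε : 0 < ε) :
    ∃ C : ℝ, 0 < C ∧ ∀ (N : ℕ) [NeZero N], Squarefree N →
      ∀ f : ZMod N × ZMod N → ℂ,
        (∀ m : ZMod N × ZMod N, m ∉ parabola N → dft N f m = 0) →
        (((N : ℝ) ^ 2)⁻¹ *
            ∑ x : ZMod N × ZMod N, ‖f x‖ ^ 4) ^ ((1 : ℝ) / 4) ≤
          C * (N : ℝ) ^ ε *
            (((N : ℝ) ^ 2)⁻¹ *
              ∑ x : ZMod N × ZMod N, ‖f x‖ ^ 2) ^ ((1 : ℝ) / 2) := by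
  obtain ⟨C, hC, hdiv⟩ := Nat.exists_two_pow_card_primeFactors_le (by positivity : 0 < 4 * ε)
  refine ⟨C ^ (1 / 4 : ℝ), by positivity, fun N _ hN f hsupp => ?_⟩
  set X := ((N : ℝ) ^ 2)⁻¹ * ∑ x, ‖f x‖ ^ 4
  set Y := ((N : ℝ) ^ 2)⁻¹ * ∑ x, ‖f x‖ ^ 2
  have hXY : X ≤ C * (N : ℝ) ^ (4 * ε) * Y ^ 2 :=
    (sum_norm_pow_four_le_of_dft_eq_zero hN hsupp).trans (by gcongr; exact hdiv N (NeZero.ne N))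
  calc X ^ (1 / 4 : ℝ) ≤ (C * (N : ℝ) ^ (4 * ε) * Y ^ 2) ^ (1 / 4 : ℝ) := by gcongr
    _ = C ^ (1 / 4 : ℝ) * (N : ℝ) ^ ε * Y ^ (1 / 2 : ℝ) := by
        rw [Real.mul_rpow (by positivity) (by positivity),
          Real.mul_rpow (by positivity) (by positivity), ← Real.rpow_mul (by positivity),
          ← Real.rpow_natCast, ← Real.rpow_mul (by positivity)]
        norm_num [show 4 * ε * (1 / 4) = ε by ring]
end

section
/- For every ε > 0 there exists a constant C_ε > 0 such that the following holds for every squarefree positive integer N. Let f : (ℤ/Nℤ)² → ℂ be supported in a set E ⊆ (ℤ/Nℤ)² with |E| < (1/4) · N^{2−4ε} / C_ε⁴, and let Σ = {(t, t²) : t ∈ ℤ/Nℤ} be the parabola. If g : (ℤ/Nℤ)² → ℂ satisfies ĝ(m) = f̂(m) for all m ∉ Σ and g minimizes the ℓ¹ norm among all such functions (i.e., Σ_x |g(x)| ≤ Σ_x |u(x)| for every u : (ℤ/Nℤ)² → ℂ with û(m) = f̂(m) for all m ∉ Σ), then g = f. -/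
open scoped BigOperators

/-!
The difference `h = g - f` has Fourier transform supported on the parabola, so it is a
combination of the characters `x ↦ ψ(x₁t + x₂t²)`, and `ℓ¹`-minimality of `g` forces `h` to put
at least half of its `ℓ¹` mass on `E`. Squaring `h` produces the frequencies
`(s + t, s² + t²)`; for squarefree `N` each of them is hit by at most `2^ω(N)` pairs `(s, t)`
(Chinese remainder theorem), which gives the restriction estimate `N²‖h‖₄⁴ ≤ 2^ω(N) ‖h‖₂⁴`.
Hölder's inequality turns the two facts into `N⁶ ≤ 16 (|E| 2^ω(N))³`, contradicting the
smallness of `E` since `2^ω(N) = O_ε(N^{4ε})`.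
-/

open Finset Complex ZMod Function ComplexConjugate

namespace LoganRecovery

variable {N : ℕ} [NeZero N]

lemma exp_neg_two_pi_I_val_div (a : ZMod N) :
    exp (-2 * Real.pi * I * (a.val : ℂ) / N) = stdAddChar (-a) := by
  rw [AddChar.map_neg_eq_inv, stdAddChar_apply, toCircle_apply, ← Complex.exp_neg]
  congr 1
  ring

lemma dft_eq_sum_stdAddChar (h : ZMod N × ZMod N → ℂ) (m : ZMod N × ZMod N) :
    dft N h m = (N : ℂ)⁻¹ * ∑ y, h y * stdAddChar (-(y.1 * m.1 + y.2 * m.2)) := by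
  simp only [dft.eq_1, exp_neg_two_pi_I_val_div]

lemma dft_sub (g f : ZMod N × ZMod N → ℂ) (m : ZMod N × ZMod N) :
    dft N (g - f) m = dft N g m - dft N f m := by
  simp only [dft.eq_1, Pi.sub_apply, sub_mul, sum_sub_distrib, mul_sub]

lemma sum_stdAddChar_mul (c : ZMod N) :
    ∑ x : ZMod N, stdAddChar (x * c) = if c = 0 then (N : ℂ) else 0 := by
  simpa [ZMod.card] using AddChar.sum_mulShift c (isPrimitive_stdAddChar N)

lemma sum_stdAddChar_dot (c : ZMod N × ZMod N) :
    ∑ x : ZMod N × ZMod N, stdAddChar (x.1 * c.1 + x.2 * c.2) =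
      if c = 0 then (N : ℂ) ^ 2 else 0 := by
  simp only [Fintype.sum_prod_type, AddChar.map_add_eq_mul, ← sum_mul_sum, sum_stdAddChar_mul]
  obtain ⟨c₁, c₂⟩ := c
  by_cases h₁ : c₁ = 0 <;> by_cases h₂ : c₂ = 0 <;> simp [h₁, h₂, sq]

theorem dft_inversion (h : ZMod N × ZMod N → ℂ) (x : ZMod N × ZMod N) :
    h x = (N : ℂ)⁻¹ * ∑ m, dft N h m * stdAddChar (x.1 * m.1 + x.2 * m.2) := by
  have hN : (N : ℂ) ≠ 0 := Nat.cast_ne_zero.mpr (NeZero.ne N)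
  have orth : ∀ y : ZMod N × ZMod N,
      ∑ m : ZMod N × ZMod N, stdAddChar (m.1 * (x - y).1 + m.2 * (x - y).2) =
        if x = y then (N : ℂ) ^ 2 else 0 := by
    intro y
    simp only [sum_stdAddChar_dot, sub_eq_zero]
  calc h x = (N : ℂ)⁻¹ * (N : ℂ)⁻¹ * ∑ y, h y *
        ∑ m : ZMod N × ZMod N, stdAddChar (m.1 * (x - y).1 + m.2 * (x - y).2) := by
        simp only [orth, mul_ite, mul_zero, sum_ite_eq, mem_univ, if_true]
        field_simp
    _ = _ := by
        simp only [dft_eq_sum_stdAddChar, mul_sum, sum_mul]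
        rw [sum_comm]
        refine sum_congr rfl fun m _ => sum_congr rfl fun y _ => ?_
        have : stdAddChar (m.1 * (x - y).1 + m.2 * (x - y).2) =
            stdAddChar (-(y.1 * m.1 + y.2 * m.2)) * stdAddChar (x.1 * m.1 + x.2 * m.2) := by
          rw [← AddChar.map_add_eq_mul, Prod.fst_sub, Prod.snd_sub]
          ring_nf
        rw [this]
        ring

theorem exists_eq_sum_parabola_of_dft_eq_zero (h : ZMod N × ZMod N → ℂ)
    (hh : ∀ m ∉ parabola N, dft N h m = 0) :
    ∃ c : ZMod N → ℂ, ∀ x : ZMod N × ZMod N,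
      h x = ∑ t, c t * stdAddChar (x.1 * t + x.2 * t ^ 2) := by
  refine ⟨fun t => (N : ℂ)⁻¹ * dft N h (t, t ^ 2), fun x => ?_⟩
  have hinj : Injective fun t : ZMod N => (t, t ^ 2) := fun _ _ hst => congrArg Prod.fst hst
  rw [dft_inversion h x, ← sum_subset (subset_univ (parabola N))
    (fun m _ hm => by rw [hh m hm, zero_mul]), parabola, sum_image hinj.injOn, mul_sum]
  exact sum_congr rfl fun t _ => by ring

lemma sum_sum_ite_mul_le_sum_card_fiber_mul_sq {ι β : Type*} [Fintype ι] [DecidableEq β]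
    (V : ι → β) (a : ι → ℝ) :
    ∑ p, ∑ q, (if V p = V q then a p * a q else 0) ≤ ∑ p, #{q | V q = V p} * a p ^ 2 := by
  have amgm : ∑ p, ∑ q, 2 * (if V p = V q then a p * a q else 0) ≤
      ∑ p, ∑ q, ((if V p = V q then a p ^ 2 else 0) + if V p = V q then a q ^ 2 else 0) := by
    refine sum_le_sum fun p _ => sum_le_sum fun q _ => ?_
    split_ifs <;> nlinarith [sq_nonneg (a p - a q)]
  have symm : ∑ p, ∑ q, (if V p = V q then a q ^ 2 else 0) =
      ∑ p, ∑ q, (if V p = V q then a p ^ 2 else 0) := by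
    rw [sum_comm]
    simp only [eq_comm]
  have fiber : ∀ p, ∑ q, (if V p = V q then a p ^ 2 else 0) = #{q | V q = V p} * a p ^ 2 := by
    intro p
    rw [← sum_filter, sum_const, nsmul_eq_mul]
    simp only [eq_comm]
  simp only [← mul_sum, sum_add_distrib, symm, fiber] at amgm
  linarith

section Energy

variable {ι : Type*} [Fintype ι] (d : ι → ℂ) (V : ι → ZMod N × ZMod N)

theorem sum_norm_sq_sum_stdAddChar :
    ((∑ x : ZMod N × ZMod N,
        ‖∑ p, d p * stdAddChar (x.1 * (V p).1 + x.2 * (V p).2)‖ ^ 2 : ℝ) : ℂ) =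
      (N : ℂ) ^ 2 * ∑ p, ∑ q, if V p = V q then d p * conj (d q) else 0 := by
  have expand : ∀ x : ZMod N × ZMod N,
      (‖∑ p, d p * stdAddChar (x.1 * (V p).1 + x.2 * (V p).2)‖ : ℂ) ^ 2 =
        ∑ p, ∑ q, d p * conj (d q) *
          stdAddChar (x.1 * (V p - V q).1 + x.2 * (V p - V q).2) := by
    intro x
    rw [← mul_conj', map_sum, sum_mul_sum]
    refine sum_congr rfl fun p _ => sum_congr rfl fun q _ => ?_
    rw [map_mul, ← AddChar.map_neg_eq_conj, mul_mul_mul_comm, ← AddChar.map_add_eq_mul,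
      Prod.fst_sub, Prod.snd_sub]
    ring_nf
  push_cast
  simp only [expand]
  rw [sum_comm, mul_sum]
  refine sum_congr rfl fun p _ => ?_
  rw [sum_comm, mul_sum]
  refine sum_congr rfl fun q _ => ?_
  simp only [← mul_sum, sum_stdAddChar_dot, sub_eq_zero]
  split_ifs <;> ring

theorem sum_norm_sq_sum_stdAddChar_of_injective (hV : Injective V) :
    ∑ x : ZMod N × ZMod N, ‖∑ p, d p * stdAddChar (x.1 * (V p).1 + x.2 * (V p).2)‖ ^ 2 =
      N ^ 2 * ∑ p, ‖d p‖ ^ 2 := by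
  classical
  have := sum_norm_sq_sum_stdAddChar d V
  simp only [hV.eq_iff, sum_ite_eq, mem_univ, if_true, mul_conj'] at this
  exact_mod_cast this

theorem sum_norm_sq_sum_stdAddChar_le {M : ℕ} (hM : ∀ p, #{q | V q = V p} ≤ M) :
    ∑ x : ZMod N × ZMod N, ‖∑ p, d p * stdAddChar (x.1 * (V p).1 + x.2 * (V p).2)‖ ^ 2 ≤
      N ^ 2 * M * ∑ p, ‖d p‖ ^ 2 := by
  calc ∑ x : ZMod N × ZMod N, ‖∑ p, d p * stdAddChar (x.1 * (V p).1 + x.2 * (V p).2)‖ ^ 2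
      = ‖(N : ℂ) ^ 2 * ∑ p, ∑ q, if V p = V q then d p * conj (d q) else 0‖ := by
        rw [← sum_norm_sq_sum_stdAddChar, norm_real, Real.norm_of_nonneg (by positivity)]
    _ ≤ N ^ 2 * ∑ p, ∑ q, if V p = V q then ‖d p‖ * ‖d q‖ else 0 := by
        rw [norm_mul, norm_pow, Complex.norm_natCast]
        gcongr
        refine (norm_sum_le _ _).trans (sum_le_sum fun p _ => ?_)
        refine (norm_sum_le _ _).trans (sum_le_sum fun q _ => ?_)
        split_ifs <;> simp
    _ ≤ N ^ 2 * ∑ p, #{q | V q = V p} * ‖d p‖ ^ 2 := by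
        gcongr _ * ?_
        exact sum_sum_ite_mul_le_sum_card_fiber_mul_sq V _
    _ ≤ N ^ 2 * ∑ p, (M : ℝ) * ‖d p‖ ^ 2 := by
        gcongr with p
        exact_mod_cast hM p
    _ = N ^ 2 * M * ∑ p, ‖d p‖ ^ 2 := by rw [← mul_sum, mul_assoc]

end Energy

lemma eq_of_forall_cast_eq_of_squarefree (hN : Squarefree N) {u v : ZMod N}
    (h : ∀ p ∈ N.primeFactors, (cast u : ZMod p) = cast v) : u = v := by
  have hdvd : ∏ p ∈ N.primeFactors, p ∣ (u - v).val :=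
    prod_primes_dvd _ (fun p hp => (Nat.prime_of_mem_primeFactors hp).prime) fun p hp => by
      rw [← natCast_eq_zero_iff, ← cast_eq_val, cast_sub (Nat.dvd_of_mem_primeFactors hp), h p hp,
        sub_self]
  rw [Nat.prod_primeFactors_of_squarefree hN] at hdvd
  exact sub_eq_zero.mp ((val_eq_zero _).mp (Nat.eq_zero_of_dvd_of_lt hdvd (val_lt _)))

lemma card_filter_two_mul_sub_mul_sub_eq_zero_le (hN : Squarefree N) (a b : ZMod N) :
    #{u : ZMod N | 2 * (u - a) * (u - b) = 0} ≤ 2 ^ N.primeFactors.card := by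
  -- modulo `2` the equation is vacuous, modulo an odd prime its only roots are `a` and `b`
  let roots : (p : ℕ) → Finset (ZMod p) := fun p => if p = 2 then {0, 1} else {cast a, cast b}
  calc #{u : ZMod N | 2 * (u - a) * (u - b) = 0}
      ≤ #(N.primeFactors.pi roots) := by
        refine card_le_card_of_injOn (fun u p _ => (cast u : ZMod p)) (fun u hu => ?_)
          fun u _ v _ huv => eq_of_forall_cast_eq_of_squarefree hN fun p hp => congr_fun₂ huv p hp
        refine mem_pi.mpr fun p hp => ?_
        have hpN := Nat.dvd_of_mem_primeFactors hp
        have hprime := Nat.prime_of_mem_primeFactors hp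
        have := Fact.mk hprime
        by_cases hp2 : p = 2
        · subst hp2
          simp only [roots, if_true]
          generalize (cast u : ZMod 2) = w
          revert w
          decide
        · have h2 : (2 : ZMod p) ≠ 0 := by
            intro h
            have := (natCast_eq_zero_iff 2 p).mp (by exact_mod_cast h)
            exact hp2 ((Nat.prime_dvd_prime_iff_eq hprime Nat.prime_two).mp this)
          have hu' := congrArg (castHom hpN (ZMod p)) (mem_filter.mp hu).2
          simp only [map_mul, map_sub, map_ofNat, map_zero, castHom_apply, mul_eq_zero, h2,
            false_or, sub_eq_zero] at hu'
          simpa [roots, hp2] using hu'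
    _ = ∏ p ∈ N.primeFactors, #(roots p) := card_pi _ _
    _ ≤ ∏ _p ∈ N.primeFactors, 2 := prod_le_prod' fun p _ => by
        dsimp only [roots]
        split_ifs <;> exact card_le_two
    _ = 2 ^ N.primeFactors.card := prod_const _

lemma card_fiber_add_sq_add_sq_le (hN : Squarefree N) (p : ZMod N × ZMod N) :
    #{q : ZMod N × ZMod N | (q.1 + q.2, q.1 ^ 2 + q.2 ^ 2) = (p.1 + p.2, p.1 ^ 2 + p.2 ^ 2)} ≤
      2 ^ N.primeFactors.card := by
  refine (card_le_card_of_injOn Prod.fst (fun q hq => ?_) fun q hq q' hq' hqq' => ?_).trans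
    (card_filter_two_mul_sub_mul_sub_eq_zero_le hN p.1 p.2)
  · obtain ⟨h₁, h₂⟩ := Prod.ext_iff.mp (mem_filter.mp hq).2
    refine mem_filter.mpr ⟨mem_univ _, ?_⟩
    linear_combination h₂ + (q.1 - q.2 - p.1 - p.2) * h₁
  · have h₁ := congrArg Prod.fst (mem_filter.mp hq).2
    have h₁' := congrArg Prod.fst (mem_filter.mp hq').2
    exact Prod.ext hqq' (by linear_combination h₁ - h₁' - hqq')

theorem sum_norm_sq_eq_of_eq_sum_parabola {h : ZMod N × ZMod N → ℂ} {c : ZMod N → ℂ}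
    (hc : ∀ x, h x = ∑ t, c t * stdAddChar (x.1 * t + x.2 * t ^ 2)) :
    ∑ x, ‖h x‖ ^ 2 = N ^ 2 * ∑ t, ‖c t‖ ^ 2 := by
  simp only [hc]
  exact sum_norm_sq_sum_stdAddChar_of_injective c (fun t => (t, t ^ 2))
    fun _ _ hst => congrArg Prod.fst hst

theorem sum_norm_pow_four_le_of_eq_sum_parabola (hN : Squarefree N) {h : ZMod N × ZMod N → ℂ}
    {c : ZMod N → ℂ} (hc : ∀ x, h x = ∑ t, c t * stdAddChar (x.1 * t + x.2 * t ^ 2)) :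
    ∑ x, ‖h x‖ ^ 4 ≤ N ^ 2 * 2 ^ N.primeFactors.card * (∑ t, ‖c t‖ ^ 2) ^ 2 := by
  have hsq : ∀ x : ZMod N × ZMod N, h x ^ 2 = ∑ q : ZMod N × ZMod N,
      c q.1 * c q.2 * stdAddChar (x.1 * (q.1 + q.2) + x.2 * (q.1 ^ 2 + q.2 ^ 2)) := by
    intro x
    rw [hc, sq, sum_mul_sum, ← Fintype.sum_prod_type']
    refine Fintype.sum_congr _ _ fun q => ?_
    rw [mul_mul_mul_comm, ← AddChar.map_add_eq_mul]
    ring_nf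
  have hnorm : ∑ q : ZMod N × ZMod N, ‖c q.1 * c q.2‖ ^ 2 = (∑ t, ‖c t‖ ^ 2) ^ 2 := by
    rw [sq (∑ t, _), sum_mul_sum, ← Fintype.sum_prod_type']
    simp only [norm_mul, mul_pow]
  calc ∑ x, ‖h x‖ ^ 4 = ∑ x, ‖h x ^ 2‖ ^ 2 := by simp only [norm_pow, ← pow_mul]
    _ ≤ N ^ 2 * 2 ^ N.primeFactors.card * ∑ q : ZMod N × ZMod N, ‖c q.1 * c q.2‖ ^ 2 := by
        simp only [hsq]
        exact_mod_cast sum_norm_sq_sum_stdAddChar_le (fun q : ZMod N × ZMod N => c q.1 * c q.2)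
          (fun q => (q.1 + q.2, q.1 ^ 2 + q.2 ^ 2)) (card_fiber_add_sq_add_sq_le hN)
    _ = _ := by rw [hnorm]

theorem sq_mul_sum_norm_pow_four_le_of_dft_eq_zero (hN : Squarefree N) (h : ZMod N × ZMod N → ℂ)
    (hh : ∀ m ∉ parabola N, dft N h m = 0) :
    (N : ℝ) ^ 2 * ∑ x, ‖h x‖ ^ 4 ≤ 2 ^ N.primeFactors.card * (∑ x, ‖h x‖ ^ 2) ^ 2 := by
  obtain ⟨c, hc⟩ := exists_eq_sum_parabola_of_dft_eq_zero h hh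
  rw [sum_norm_sq_eq_of_eq_sum_parabola hc]
  calc (N : ℝ) ^ 2 * ∑ x, ‖h x‖ ^ 4
      ≤ N ^ 2 * (N ^ 2 * 2 ^ N.primeFactors.card * (∑ t, ‖c t‖ ^ 2) ^ 2) := by
        gcongr
        exact sum_norm_pow_four_le_of_eq_sum_parabola hN hc
    _ = _ := by ring

lemma exists_two_pow_card_primeFactors_le {e : ℝ} (he : 0 < e) :
    ∃ K : ℝ, 0 < K ∧ ∀ n : ℕ, n ≠ 0 → (2 : ℝ) ^ n.primeFactors.card ≤ K * (n : ℝ) ^ e := by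
  set B := ⌈(2 : ℝ) ^ (1 / e)⌉₊
  refine ⟨2 ^ (B + 1), by positivity, fun n hn => ?_⟩
  -- at most `B + 1` prime factors are `≤ B`, and each larger one contributes `2 ≤ p ^ e`
  have hsmall : #{p ∈ n.primeFactors | p ≤ B} ≤ B + 1 := by
    simpa using card_le_card fun p hp => mem_range.mpr (Nat.lt_succ_of_le (mem_filter.mp hp).2)
  have hlarge : (2 : ℝ) ^ #{p ∈ n.primeFactors | ¬p ≤ B} ≤ (n : ℝ) ^ e := by
    have two_le : ∀ p ∈ {p ∈ n.primeFactors | ¬p ≤ B}, (2 : ℝ) ≤ (p : ℝ) ^ e := by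
      intro p hp
      have hBp : (2 : ℝ) ^ (1 / e) ≤ p :=
        (Nat.le_ceil _).trans (by exact_mod_cast (not_le.mp (mem_filter.mp hp).2).le)
      calc (2 : ℝ) = ((2 : ℝ) ^ (1 / e)) ^ e := by
            rw [← Real.rpow_mul zero_le_two, one_div_mul_cancel he.ne', Real.rpow_one]
        _ ≤ (p : ℝ) ^ e := by gcongr
    have hdvd : ∏ p ∈ {p ∈ n.primeFactors | ¬p ≤ B}, p ∣ n :=
      (prod_dvd_prod_of_subset _ _ _ (filter_subset _ _)).trans (Nat.prod_primeFactors_dvd n)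
    calc (2 : ℝ) ^ #{p ∈ n.primeFactors | ¬p ≤ B}
        = ∏ _p ∈ {p ∈ n.primeFactors | ¬p ≤ B}, (2 : ℝ) := (prod_const _).symm
      _ ≤ ∏ p ∈ {p ∈ n.primeFactors | ¬p ≤ B}, (p : ℝ) ^ e := prod_le_prod (by norm_num) two_le
      _ = (∏ p ∈ {p ∈ n.primeFactors | ¬p ≤ B}, (p : ℝ)) ^ e :=
          Real.finsetProd_rpow _ _ (fun p _ => Nat.cast_nonneg p) e
      _ ≤ (n : ℝ) ^ e := by
          gcongr
          rw [← Nat.cast_prod]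
          exact_mod_cast Nat.le_of_dvd (Nat.pos_of_ne_zero hn) hdvd
  calc (2 : ℝ) ^ n.primeFactors.card
      = 2 ^ #{p ∈ n.primeFactors | p ≤ B} * 2 ^ #{p ∈ n.primeFactors | ¬p ≤ B} := by
        rw [← pow_add, card_filter_add_card_filter_not]
    _ ≤ 2 ^ (B + 1) * (n : ℝ) ^ e := by
        gcongr
        exact one_le_two

lemma exists_card_mul_two_pow_card_primeFactors_lt {ε : ℝ} (hε : 0 < ε) :
    ∃ C : ℝ, 0 < C ∧ ∀ (N : ℕ) (k : ℝ), N ≠ 0 → 0 ≤ k →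
      k < 1 / 4 * (N : ℝ) ^ ((2 : ℝ) - 4 * ε) / C ^ 4 →
        k * 2 ^ N.primeFactors.card < N ^ 2 / 8 := by
  obtain ⟨K, hK, hω⟩ := exists_two_pow_card_primeFactors_le (e := 4 * ε) (by positivity)
  refine ⟨2 * K + 1, by positivity, fun N k hN hk hkN => ?_⟩
  have hN₀ : (0 : ℝ) < N := Nat.cast_pos.mpr (Nat.pos_of_ne_zero hN)
  have hC : 2 * K ≤ (2 * K + 1) ^ 4 :=
    (le_self_pow₀ (by linarith) (by norm_num)).trans' (by linarith)
  have hNpow : (N : ℝ) ^ ((2 : ℝ) - 4 * ε) * N ^ (4 * ε) = N ^ 2 := by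
    rw [← Real.rpow_add hN₀]
    norm_num
  calc k * 2 ^ N.primeFactors.card ≤ k * (K * N ^ (4 * ε)) := by gcongr; exact hω N hN
    _ < 1 / 4 * N ^ ((2 : ℝ) - 4 * ε) / (2 * K + 1) ^ 4 * (K * N ^ (4 * ε)) := by gcongr
    _ = N ^ 2 * K / (4 * (2 * K + 1) ^ 4) := by rw [← hNpow]; field_simp
    _ ≤ N ^ 2 / 8 := by
        rw [div_le_div_iff₀ (by positivity) (by norm_num)]
        nlinarith

lemma sum_sq_pow_three_le {ι : Type*} (s : Finset ι) {a : ι → ℝ} (ha : ∀ i ∈ s, 0 ≤ a i) :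
    (∑ i ∈ s, a i ^ 2) ^ 3 ≤ (∑ i ∈ s, a i) ^ 2 * ∑ i ∈ s, a i ^ 4 := by
  set S₁ := ∑ i ∈ s, a i
  set S₂ := ∑ i ∈ s, a i ^ 2
  set S₃ := ∑ i ∈ s, a i ^ 3
  set S₄ := ∑ i ∈ s, a i ^ 4
  have h₂ : 0 ≤ S₂ := sum_nonneg fun i _ => sq_nonneg _
  have h₁₃ : S₂ ^ 2 ≤ S₁ * S₃ := sum_sq_le_sum_mul_sum_of_sq_le_mul s ha
    (fun i hi => pow_nonneg (ha i hi) 3) fun i _ => by ring_nf; rfl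
  have h₂₄ : S₃ ^ 2 ≤ S₂ * S₄ := sum_sq_le_sum_mul_sum_of_sq_le_mul s (fun i _ => sq_nonneg _)
    (fun i hi => pow_nonneg (ha i hi) 4) fun i _ => by ring_nf; rfl
  rcases h₂.eq_or_lt with h₀ | hpos
  · rw [← h₀]
    simp only [ne_eq, OfNat.ofNat_ne_zero, not_false_eq_true, zero_pow]
    exact mul_nonneg (sq_nonneg _) (sum_nonneg fun i _ => by positivity)
  refine le_of_mul_le_mul_right ?_ hpos
  calc S₂ ^ 3 * S₂ = (S₂ ^ 2) ^ 2 := by ring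
    _ ≤ (S₁ * S₃) ^ 2 := by gcongr
    _ = S₁ ^ 2 * S₃ ^ 2 := by ring
    _ ≤ S₁ ^ 2 * (S₂ * S₄) := by gcongr
    _ = S₁ ^ 2 * S₄ * S₂ := by ring

lemma cube_le_of_sum_le_two_mul_sum {ι : Type*} [Fintype ι] {a : ι → ℝ} (ha : ∀ i, 0 ≤ a i)
    (s : Finset ι) {L M : ℝ} (hL : 0 ≤ L) (hpos : 0 < ∑ i, a i ^ 2)
    (hconc : ∑ i, a i ≤ 2 * ∑ i ∈ s, a i) (h₄ : L * ∑ i, a i ^ 4 ≤ M * (∑ i, a i ^ 2) ^ 2) :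
    L ^ 3 ≤ 16 * (#s * M) ^ 3 := by
  set S₁ := ∑ i, a i
  set S₂ := ∑ i, a i ^ 2
  set S₄ := ∑ i, a i ^ 4
  set T := ∑ i ∈ s, a i
  have hS₁ : 0 ≤ S₁ := sum_nonneg fun i _ => ha i
  have hS₄ : 0 ≤ S₄ := sum_nonneg fun i _ => pow_nonneg (ha i) 4
  have holder : S₂ ^ 3 ≤ S₁ ^ 2 * S₄ := sum_sq_pow_three_le _ fun i _ => ha i
  have hT : T ^ 4 ≤ #s ^ 3 * S₄ :=
    (pow_sum_le_card_mul_sum_pow (fun i _ => ha i) 3).trans <| by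
      gcongr
      exact sum_le_sum_of_subset_of_nonneg (subset_univ s) fun i _ _ => pow_nonneg (ha i) 4
  refine le_of_mul_le_mul_right ?_ (pow_pos hpos 6)
  calc L ^ 3 * S₂ ^ 6 = L ^ 3 * (S₂ ^ 3) ^ 2 := by ring
    _ ≤ L ^ 3 * (S₁ ^ 2 * S₄) ^ 2 := by gcongr
    _ = L ^ 3 * S₁ ^ 4 * S₄ ^ 2 := by ring
    _ ≤ L ^ 3 * (2 * T) ^ 4 * S₄ ^ 2 := by gcongr
    _ = 16 * L ^ 3 * T ^ 4 * S₄ ^ 2 := by ring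
    _ ≤ 16 * L ^ 3 * (#s ^ 3 * S₄) * S₄ ^ 2 := by gcongr
    _ = 16 * #s ^ 3 * (L * S₄) ^ 3 := by ring
    _ ≤ 16 * #s ^ 3 * (M * S₂ ^ 2) ^ 3 := by gcongr
    _ = 16 * (#s * M) ^ 3 * S₂ ^ 6 := by ring

lemma sum_norm_sub_le_two_mul_sum_norm_sub {α E : Type*} [Fintype α] [SeminormedAddCommGroup E]
    {f g : α → E} (s : Finset α) (hf : ∀ x ∉ s, f x = 0) (hgf : ∑ x, ‖g x‖ ≤ ∑ x, ‖f x‖) :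
    ∑ x, ‖g x - f x‖ ≤ 2 * ∑ x ∈ s, ‖g x - f x‖ := by
  classical
  have hf_sum : ∑ x ∈ s, ‖f x‖ = ∑ x, ‖f x‖ :=
    sum_subset (subset_univ s) fun x _ hx => by rw [hf x hx, norm_zero]
  have hout : ∑ x ∈ sᶜ, ‖g x - f x‖ = ∑ x ∈ sᶜ, ‖g x‖ :=
    sum_congr rfl fun x hx => by rw [hf x (mem_compl.mp hx), sub_zero]
  have hin : ∑ x ∈ s, (‖f x‖ - ‖g x‖) ≤ ∑ x ∈ s, ‖g x - f x‖ :=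
    sum_le_sum fun x _ => norm_sub_rev (g x) (f x) ▸ norm_sub_norm_le _ _
  rw [sum_sub_distrib] at hin
  have hg := sum_add_sum_compl s fun x => ‖g x‖
  have hgf' := sum_add_sum_compl s fun x => ‖g x - f x‖
  linarith

theorem eq_of_dft_eq_off_parabola_of_sum_norm_le (hN : Squarefree N)
    {f g : ZMod N × ZMod N → ℂ} {E : Finset (ZMod N × ZMod N)} (hfE : ∀ x ∉ E, f x = 0)
    (hE : (#E : ℝ) * 2 ^ N.primeFactors.card < N ^ 2 / 8)
    (hg : ∀ m ∉ parabola N, dft N g m = dft N f m) (hgf : ∑ x, ‖g x‖ ≤ ∑ x, ‖f x‖) :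
    g = f := by
  by_contra hne
  have hpos : 0 < ∑ x, ‖(g - f) x‖ ^ 2 := by
    obtain ⟨x, hx⟩ := Function.ne_iff.mp hne
    exact lt_of_lt_of_le (pow_pos (norm_pos_iff.mpr (sub_ne_zero.mpr hx)) 2)
      (single_le_sum (fun y _ => sq_nonneg ‖(g - f) y‖) (mem_univ x))
  have hcube := cube_le_of_sum_le_two_mul_sum (fun x => norm_nonneg ((g - f) x)) E
    (sq_nonneg (N : ℝ)) hpos (sum_norm_sub_le_two_mul_sum_norm_sub E hfE hgf)
    (sq_mul_sum_norm_pow_four_le_of_dft_eq_zero hN (g - f) fun m hm => by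
      rw [dft_sub, hg m hm, sub_self])
  have hlt := pow_lt_pow_left₀ hE (by positivity) three_ne_zero
  have h32 : 16 * ((N : ℝ) ^ 2 / 8) ^ 3 = ((N : ℝ) ^ 2) ^ 3 / 32 := by ring
  linarith [pow_pos (pow_pos (Nat.cast_pos.mpr (NeZero.pos N) : (0 : ℝ) < N) 2) 3]

end LoganRecovery

open LoganRecovery in
theorem logan_recovery_parabola (ε : ℝ) (hε : 0 < ε) :
    ∃ C : ℝ, 0 < C ∧ ∀ (N : ℕ) [NeZero N], Squarefree N →
      ∀ (f : ZMod N × ZMod N → ℂ) (E : Set (ZMod N × ZMod N)),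
        (∀ x : ZMod N × ZMod N, x ∉ E → f x = 0) →
        (E.ncard : ℝ) < (1 / 4) * (N : ℝ) ^ ((2 : ℝ) - 4 * ε) / C ^ 4 →
        ∀ g : ZMod N × ZMod N → ℂ,
          (∀ m : ZMod N × ZMod N, m ∉ parabola N → dft N g m = dft N f m) →
          (∀ u : ZMod N × ZMod N → ℂ,
            (∀ m : ZMod N × ZMod N, m ∉ parabola N → dft N u m = dft N f m) →
            ∑ x : ZMod N × ZMod N, ‖g x‖ ≤
              ∑ x : ZMod N × ZMod N, ‖u x‖) →
          g = f := by
  classical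
  obtain ⟨C, hC, hsmall⟩ := exists_card_mul_two_pow_card_primeFactors_lt hε
  refine ⟨C, hC, fun N _ hN f E hfE hE g hg hmin => ?_⟩
  rw [Set.ncard_eq_toFinset_card'] at hE
  exact eq_of_dft_eq_off_parabola_of_sum_norm_le hN (fun x hx => hfE x (by simpa using hx))
    (hsmall N _ (NeZero.ne N) (Nat.cast_nonneg _) hE) hg (hmin f fun _ _ => rfl)
end
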